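/- arXiv:2504.19380 — 4 statements merged into one kernel-verified Lean document; each statement's English description precedes it below -/
import Mathlib

section
/- Let 𝒵 be a finite nonempty type, π a probability mass function on 𝒵, and T : 𝒵 → ℝ. Define the randomization p-value p(z) := π({z* ∈ 𝒵 : T(z*) ≥ T(z)}). Then for every α ∈ [0,1], π({z ∈ 𝒵 : p(z) ≤ α}) ≤ α; i.e., if Z is distributed according to π, then Pr(p(Z) ≤ α) ≤ α. -/
open Classical in
/-- Marginal validity of the randomization p-value: if `π` is a probability mass
function on a finite nonempty type `𝒵` of treatment assignments and `T` is a test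
statistic, then the p-value `p z = π {z* : T z* ≥ T z}` is super-uniform. -/
theorem randomization_pvalue_valid
    {𝒵 : Type*} [Fintype 𝒵] [Nonempty 𝒵]
    (π : 𝒵 → ℝ) (hπ0 : ∀ z, 0 ≤ π z) (hπ1 : ∑ z, π z = 1)
    (T : 𝒵 → ℝ)
    (p : 𝒵 → ℝ)
    (hp : ∀ z, p z = ∑ z' ∈ Finset.univ.filter (fun z' => T z ≤ T z'), π z')
    (α : ℝ) (hα : α ∈ Set.Icc (0 : ℝ) 1) :
    ∑ z ∈ Finset.univ.filter (fun z => p z ≤ α), π z ≤ α := by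
  set S := Finset.univ.filter (fun z => p z ≤ α) with hS
  rcases S.eq_empty_or_nonempty with h | h
  · simp [h, hα.1]
  · obtain ⟨z₀, hz₀S, hz₀min⟩ := S.exists_min_image T h
    have hsub : S ⊆ Finset.univ.filter (fun z' => T z₀ ≤ T z') := by
      intro z hz
      simp only [Finset.mem_filter, Finset.mem_univ, true_and]
      exact hz₀min z hz
    calc ∑ z ∈ S, π z ≤ ∑ z ∈ Finset.univ.filter (fun z' => T z₀ ≤ T z'), π z :=
          Finset.sum_le_sum_of_subset_of_nonneg hsub (fun z _ _ => hπ0 z)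
      _ = p z₀ := (hp z₀).symm
      _ ≤ α := (Finset.mem_filter.mp hz₀S).2
end

section
/- Let 𝒵 be a finite nonempty type, π a probability mass function on 𝒵, T : 𝒵 → ℝ, and f : 𝒵 → G a labeling into an arbitrary type G (inducing a partition of 𝒵 into the fibers of f). For z with π(f⁻¹(f(z))) > 0, define the conditional randomization p-value p(z) := π({z* : f(z*) = f(z) and T(z*) ≥ T(z)}) / π({z* : f(z*) = f(z)}). Then for every g ∈ G with π(f⁻¹(g)) > 0 and every α ∈ [0,1], π({z : f(z) = g and p(z) ≤ α}) ≤ α · π(f⁻¹(g)); i.e., the conditional probability given f(Z) = g that p(Z) ≤ α is at most α. -/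
open Classical in
/-- Conditional validity of the conditional randomization p-value: given a labeling
`f : 𝒵 → G` inducing a partition of the assignment space into fibers, the p-value
computed within the fiber of the observed assignment is super-uniform conditionally
on each fiber of positive probability. -/
theorem conditional_randomization_pvalue_valid
    {𝒵 : Type*} [Fintype 𝒵] [Nonempty 𝒵] {G : Type*}
    (π : 𝒵 → ℝ) (hπ0 : ∀ z, 0 ≤ π z) (hπ1 : ∑ z, π z = 1)
    (T : 𝒵 → ℝ) (f : 𝒵 → G)
    (p : 𝒵 → ℝ)
    (hp : ∀ z, 0 < ∑ z' ∈ Finset.univ.filter (fun z' => f z' = f z), π z' →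
      p z = (∑ z' ∈ Finset.univ.filter (fun z' => f z' = f z ∧ T z ≤ T z'), π z') /
        (∑ z' ∈ Finset.univ.filter (fun z' => f z' = f z), π z'))
    (g : G) (hg : 0 < ∑ z ∈ Finset.univ.filter (fun z => f z = g), π z)
    (α : ℝ) (hα : α ∈ Set.Icc (0 : ℝ) 1) :
    ∑ z ∈ Finset.univ.filter (fun z => f z = g ∧ p z ≤ α), π z ≤
      α * ∑ z ∈ Finset.univ.filter (fun z => f z = g), π z := by
  set S := Finset.univ.filter (fun z => f z = g ∧ p z ≤ α) with hS
  by_cases hSe : S = ∅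
  · rw [hSe]
    simp only [Finset.sum_empty]
    exact mul_nonneg hα.1 hg.le
  · obtain ⟨z₀, hz₀S, hz₀min⟩ := Finset.exists_min_image S T (Finset.nonempty_of_ne_empty hSe)
    have hz₀ := Finset.mem_filter.mp hz₀S
    have hfz₀ : f z₀ = g := hz₀.2.1
    have hfiber : (Finset.univ.filter (fun z' => f z' = f z₀)) =
        Finset.univ.filter (fun z => f z = g) := by
      apply Finset.filter_congr; intro z _; rw [hfz₀]
    have hB : 0 < ∑ z' ∈ Finset.univ.filter (fun z' => f z' = f z₀), π z' := by
      rw [hfiber]; exact hg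
    have hpz₀ := hp z₀ hB
    have hA : (∑ z' ∈ Finset.univ.filter (fun z' => f z' = f z₀ ∧ T z₀ ≤ T z'), π z')
        = p z₀ * ∑ z' ∈ Finset.univ.filter (fun z' => f z' = f z₀), π z' := by
      rw [hpz₀, div_mul_cancel₀]
      exact ne_of_gt hB
    have hsub : S ⊆ Finset.univ.filter (fun z' => f z' = f z₀ ∧ T z₀ ≤ T z') := by
      intro z hz
      have hzm := Finset.mem_filter.mp hz
      exact Finset.mem_filter.mpr ⟨Finset.mem_univ z,
        by rw [hfz₀]; exact hzm.2.1, hz₀min z hz⟩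
    calc ∑ z ∈ S, π z
        ≤ ∑ z' ∈ Finset.univ.filter (fun z' => f z' = f z₀ ∧ T z₀ ≤ T z'), π z' :=
          Finset.sum_le_sum_of_subset_of_nonneg hsub (fun z _ _ => hπ0 z)
      _ = p z₀ * ∑ z' ∈ Finset.univ.filter (fun z' => f z' = f z₀), π z' := hA
      _ ≤ α * ∑ z' ∈ Finset.univ.filter (fun z' => f z' = f z₀), π z' :=
          mul_le_mul_of_nonneg_right hz₀.2.2 hB.le
      _ = α * ∑ z ∈ Finset.univ.filter (fun z => f z = g), π z := by rw [hfiber]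
end

section
/- Let n be a natural number, π a probability mass function on Fin n → Bool, T : (Fin n → Bool) → ℝ a test statistic, and S : (Fin n → Bool) → Finset (Fin n) a self-contained selection map. For an assignment z, let C(z) := {z' : z' i = z i for every i ∉ S(z)} be its conditioning cell, and for π(C(z)) > 0 define the selective randomization p-value p(z) := π(C(z) ∩ {z' : T(z') ≥ T(z)}) / π(C(z)). Then: (i) for every z₀ with π(C(z₀)) > 0 and every α ∈ [0,1], π({z ∈ C(z₀) : p(z) ≤ α}) ≤ α · π(C(z₀)); (ii) consequently, for every α ∈ [0,1] and every possible selected subgroup s ⊆ Fin n with π({z : S(z) = s}) > 0, π({z : S(z) = s and p(z) ≤ α}) ≤ α · π({z : S(z) = s}); and (iii) π({z : p(z) ≤ α}) ≤ α. -/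
open Classical in
/-- Validity of the selective randomization test. For a self-contained selection
map `S`, the selective randomization p-value — which re-randomizes only the
treatments of the selected units, holding the unselected units' treatments fixed —
controls (i) the type I error conditionally on each conditioning cell, (ii) the
type I error conditionally on the selected subgroup, and (iii) the marginal type I
error. -/
theorem selective_randomization_test_valid {n : ℕ}
    (π : (Fin n → Bool) → ℝ) (hπ0 : ∀ z, 0 ≤ π z) (hπ1 : ∑ z, π z = 1)
    (T : (Fin n → Bool) → ℝ)
    (S : (Fin n → Bool) → Finset (Fin n))
    (hS : ∀ z z' : (Fin n → Bool), (∀ i ∉ S z, z' i = z i) → S z' = S z)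
    (C : (Fin n → Bool) → Finset (Fin n → Bool))
    (hC : ∀ z, C z = Finset.univ.filter (fun z' => ∀ i ∉ S z, z' i = z i))
    (p : (Fin n → Bool) → ℝ)
    (hp : ∀ z, 0 < ∑ z' ∈ C z, π z' →
      p z = (∑ z' ∈ (C z).filter (fun z' => T z ≤ T z'), π z') / (∑ z' ∈ C z, π z'))
    (α : ℝ) (hα : α ∈ Set.Icc (0 : ℝ) 1) :
    (∀ z₀, 0 < ∑ z' ∈ C z₀, π z' →
      ∑ z ∈ (C z₀).filter (fun z => p z ≤ α), π z ≤ α * ∑ z' ∈ C z₀, π z') ∧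
    (∀ s : Finset (Fin n), 0 < ∑ z ∈ Finset.univ.filter (fun z => S z = s), π z →
      ∑ z ∈ Finset.univ.filter (fun z => S z = s ∧ p z ≤ α), π z ≤
        α * ∑ z ∈ Finset.univ.filter (fun z => S z = s), π z) ∧
    ∑ z ∈ Finset.univ.filter (fun z => p z ≤ α), π z ≤ α := by
  classical
  obtain ⟨hα0, hα1⟩ := hα
  -- every z belongs to its own cell
  have hself : ∀ z, z ∈ C z := by
    intro z; rw [hC]; simp
  have hmemC : ∀ z₀ z, z ∈ C z₀ → ∀ i ∉ S z₀, z i = z₀ i := by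
    intro z₀ z hz
    rw [hC z₀] at hz
    simpa using hz
  -- cells are constant on themselves
  have hCeq : ∀ z₀ z, z ∈ C z₀ → C z = C z₀ := by
    intro z₀ z hz
    have hz' := hmemC z₀ z hz
    have hSz : S z = S z₀ := hS z₀ z hz'
    rw [hC, hC, hSz]
    apply Finset.filter_congr
    intro w _
    constructor
    · intro h i hi; rw [h i hi, hz' i hi]
    · intro h i hi; rw [h i hi, ← hz' i hi]
  -- Part (i): the per-cell bound
  have cell : ∀ z₀, 0 < ∑ z' ∈ C z₀, π z' →
      ∑ z ∈ (C z₀).filter (fun z => p z ≤ α), π z ≤ α * ∑ z' ∈ C z₀, π z' := by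
    intro z₀ hm
    rcases Finset.eq_empty_or_nonempty ((C z₀).filter (fun z => p z ≤ α)) with he | hne
    · rw [he, Finset.sum_empty]
      exact mul_nonneg hα0 hm.le
    · obtain ⟨zs, hzsB, hmin⟩ := Finset.exists_min_image _ T hne
      have hzsC : zs ∈ C z₀ := (Finset.mem_filter.mp hzsB).1
      have hpzs : p zs ≤ α := (Finset.mem_filter.mp hzsB).2
      have hCz : C zs = C z₀ := hCeq z₀ zs hzsC
      have hsub : (C z₀).filter (fun z => p z ≤ α) ⊆
          (C z₀).filter (fun z => T zs ≤ T z) := by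
        intro z hz
        rw [Finset.mem_filter] at hz ⊢
        exact ⟨hz.1, hmin z (Finset.mem_filter.mpr hz)⟩
      have h1 : ∑ z ∈ (C z₀).filter (fun z => p z ≤ α), π z ≤
          ∑ z ∈ (C z₀).filter (fun z => T zs ≤ T z), π z :=
        Finset.sum_le_sum_of_subset_of_nonneg hsub (fun z _ _ => hπ0 z)
      have hpz := hp zs (by rw [hCz]; exact hm)
      rw [hCz] at hpz
      have h2 : ∑ z ∈ (C z₀).filter (fun z => T zs ≤ T z), π z
          = p zs * ∑ z' ∈ C z₀, π z' := by
        rw [hpz, div_mul_cancel₀ _ hm.ne']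
      calc ∑ z ∈ (C z₀).filter (fun z => p z ≤ α), π z
          ≤ ∑ z ∈ (C z₀).filter (fun z => T zs ≤ T z), π z := h1
        _ = p zs * ∑ z' ∈ C z₀, π z' := h2
        _ ≤ α * ∑ z' ∈ C z₀, π z' := mul_le_mul_of_nonneg_right hpzs hm.le
  -- general lemma for cell-closed sets
  have union : ∀ D : Finset (Fin n → Bool), (∀ z ∈ D, C z ⊆ D) →
      ∑ z ∈ D.filter (fun z => p z ≤ α), π z ≤ α * ∑ z ∈ D, π z := by
    intro D hD
    have fib : ∀ z₀ ∈ D, D.filter (fun z => C z = C z₀) = C z₀ := by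
      intro z₀ hz₀
      ext z
      simp only [Finset.mem_filter]
      constructor
      · rintro ⟨hzD, hCz⟩; rw [← hCz]; exact hself z
      · intro hz; exact ⟨hD z₀ hz₀ hz, hCeq z₀ z hz⟩
    have hmaps : ∀ z ∈ D, C z ∈ D.image C := fun z hz => Finset.mem_image_of_mem C hz
    have hmaps' : ∀ z ∈ D.filter (fun z => p z ≤ α), C z ∈ D.image C :=
      fun z hz => hmaps z (Finset.mem_filter.mp hz).1
    have key1 : ∑ z ∈ D.filter (fun z => p z ≤ α), π z
        = ∑ A ∈ D.image C, ∑ z ∈ (D.filter (fun z => C z = A)).filter (fun z => p z ≤ α),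
            π z := by
      rw [← Finset.sum_fiberwise_of_maps_to hmaps' π]
      refine Finset.sum_congr rfl fun A _ => ?_
      rw [Finset.filter_comm]
    have key2 : ∑ z ∈ D, π z
        = ∑ A ∈ D.image C, ∑ z ∈ D.filter (fun z => C z = A), π z :=
      (Finset.sum_fiberwise_of_maps_to hmaps π).symm
    rw [key1, key2, Finset.mul_sum]
    refine Finset.sum_le_sum fun A hA => ?_
    obtain ⟨z₀, hz₀D, rfl⟩ := Finset.mem_image.mp hA
    rw [fib z₀ hz₀D]
    rcases lt_or_ge 0 (∑ z' ∈ C z₀, π z') with hm | hm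
    · exact cell z₀ hm
    · have hm0 : ∑ z' ∈ C z₀, π z' = 0 :=
        le_antisymm hm (Finset.sum_nonneg fun z _ => hπ0 z)
      have : ∑ z ∈ (C z₀).filter (fun z => p z ≤ α), π z ≤ ∑ z' ∈ C z₀, π z' :=
        Finset.sum_le_sum_of_subset_of_nonneg (Finset.filter_subset _ _)
          (fun z _ _ => hπ0 z)
      rw [hm0] at this ⊢
      simpa using this
  refine ⟨cell, ?_, ?_⟩
  · intro s _
    have hclosed : ∀ z ∈ Finset.univ.filter (fun z => S z = s),
        C z ⊆ Finset.univ.filter (fun z => S z = s) := by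
      intro z hz z' hz'
      have hSz : S z = s := (Finset.mem_filter.mp hz).2
      have : S z' = S z := hS z z' (hmemC z z' hz')
      simp [this, hSz]
    have := union _ hclosed
    rwa [Finset.filter_filter] at this
  · have hclosed : ∀ z ∈ (Finset.univ : Finset (Fin n → Bool)),
        C z ⊆ Finset.univ := fun z _ z' _ => Finset.mem_univ z'
    have := union _ hclosed
    rwa [hπ1, mul_one] at this
end

section
/- Let the units Fin n be partitioned into strata {H_k}_{k=1}^{K}, and let π be the product over strata of uniform distributions on {z restricted to H_k : #{i ∈ H_k : z i = true} = n₁ₖ} (a stratified completely randomized design). Let A ⊆ Fin n and fix v : {i : i ∉ A} → Bool, with n₁ₖ' := #{i ∈ H_k \ A : v i = true}, and assume n₁ₖ' ≤ n₁ₖ and n₁ₖ − n₁ₖ' ≤ |H_k ∩ A| for every k. Then the conditional distribution of Z under π given the event {z : z i = v i for all i ∉ A}, pushed forward to the coordinates in A, is the product over strata k of the uniform distributions on {w : H_k ∩ A → Bool : #{i : w i = true} = n₁ₖ − n₁ₖ'}. -/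
open Finset

lemma strat_count {n K : ℕ} (B : Fin K → Finset (Fin n))
    (hdisj : Pairwise (Function.onFun Disjoint B))
    (A : Finset (Fin n)) (hB : ∀ k, B k ⊆ A)
    (hcov : ∀ i ∈ A, ∃ k, i ∈ B k) (v : Fin n → Bool) (r : Fin K → ℕ) :
    (Finset.univ.filter (fun z : Fin n → Bool =>
        (∀ i ∉ A, z i = v i) ∧ ∀ k, ((B k).filter (fun i => z i = true)).card = r k)).card
      = ∏ k, (B k).card.choose (r k) := by
  classical
  have hcard : ∏ k, (B k).card.choose (r k)
      = (Fintype.piFinset (fun k => (B k).powersetCard (r k))).card := by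
    rw [Fintype.card_piFinset]
    exact Finset.prod_congr rfl fun k _ => (Finset.card_powersetCard _ _).symm
  rw [hcard]
  have key : ∀ s : Fin K → Finset (Fin n), (∀ k, s k ⊆ B k) → ∀ k, (B k).filter
      (fun i => (if i ∈ A then decide (∃ j, i ∈ s j) else v i) = true) = s k := by
    intro s hs k
    ext i
    simp only [mem_filter]
    constructor
    · rintro ⟨hiB, hi⟩
      rw [if_pos (hB k hiB)] at hi
      obtain ⟨j, hj⟩ := of_decide_eq_true hi
      rcases eq_or_ne j k with rfl | hne
      · exact hj
      · exact absurd hiB (Finset.disjoint_left.mp (hdisj hne) (hs j hj))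
    · intro hi
      exact ⟨hs k hi, by rw [if_pos (hB k (hs k hi))]; exact decide_eq_true ⟨k, hi⟩⟩
  refine Finset.card_bij' (fun z _ => fun k => (B k).filter (fun i => z i = true))
    (fun s _ => fun i => if i ∈ A then decide (∃ k, i ∈ s k) else v i) ?_ ?_ ?_ ?_
  · intro z hz
    simp only [mem_filter, mem_univ, true_and] at hz
    simp only [Fintype.mem_piFinset, Finset.mem_powersetCard]
    exact fun k => ⟨Finset.filter_subset _ _, hz.2 k⟩
  · intro s hs
    simp only [Fintype.mem_piFinset, Finset.mem_powersetCard] at hs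
    simp only [mem_filter, mem_univ, true_and]
    refine ⟨fun i hi => if_neg hi, fun k => ?_⟩
    rw [key s (fun k => (hs k).1) k]; exact (hs k).2
  · intro z hz
    simp only [mem_filter, mem_univ, true_and] at hz
    funext i
    dsimp only
    by_cases hi : i ∈ A
    · rw [if_pos hi]
      obtain ⟨k, hk⟩ := hcov i hi
      by_cases hzi : z i = true
      · rw [hzi]
        exact decide_eq_true ⟨k, Finset.mem_filter.2 ⟨hk, hzi⟩⟩
      · rw [Bool.not_eq_true] at hzi
        rw [hzi]
        refine decide_eq_false ?_
        rintro ⟨j, hj⟩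
        simp [hzi] at hj
    · rw [if_neg hi]; exact (hz.1 i hi).symm
  · intro s hs
    simp only [Fintype.mem_piFinset, Finset.mem_powersetCard] at hs
    funext k
    dsimp only
    exact key s (fun k => (hs k).1) k

open Classical in
/-- In a stratified completely randomized design with strata `H k` and `n₁ k`
treated units per stratum, conditioning on the treatment assignments outside a
subset `A` (which fix `n₁' k` treated units in each stratum) leaves, on the
coordinates in `A`, the product over strata of uniform completely randomized
designs on `H k ∩ A` with `n₁ k - n₁' k` treated units. -/
theorem stratified_crd_conditional {n K : ℕ}
    (H : Fin K → Finset (Fin n))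
    (hdisj : Pairwise (Function.onFun Disjoint H))
    (hcover : Finset.univ.biUnion H = Finset.univ)
    (n₁ : Fin K → ℕ) (hn₁ : ∀ k, n₁ k ≤ (H k).card)
    (π : (Fin n → Bool) → ℝ)
    (hπ : ∀ z, π z = ∏ k : Fin K,
      (if ((H k).filter (fun i => z i = true)).card = n₁ k
        then (1 : ℝ) / ((H k).card.choose (n₁ k)) else 0))
    (A : Finset (Fin n)) (v : Fin n → Bool) (n₁' : Fin K → ℕ)
    (hn₁' : ∀ k, n₁' k = (((H k) \ A).filter (fun i => v i = true)).card)
    (h₁ : ∀ k, n₁' k ≤ n₁ k) (h₂ : ∀ k, n₁ k - n₁' k ≤ ((H k) ∩ A).card)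
    (w : Fin n → Bool) :
    (∑ z ∈ Finset.univ.filter
        (fun z : Fin n → Bool => (∀ i ∈ A, z i = w i) ∧ (∀ i ∉ A, z i = v i)), π z) /
      (∑ z ∈ Finset.univ.filter (fun z : Fin n → Bool => ∀ i ∉ A, z i = v i), π z) =
    ∏ k : Fin K,
      (if (((H k) ∩ A).filter (fun i => w i = true)).card = n₁ k - n₁' k
        then (1 : ℝ) / (((H k) ∩ A).card.choose (n₁ k - n₁' k)) else 0) := by
  classical
  set c : ℝ := ∏ k, (1 : ℝ) / ((H k).card.choose (n₁ k)) with hc_def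
  -- splitting the count over H k into the parts inside and outside A
  have hsplit : ∀ z : Fin n → Bool, (∀ i ∉ A, z i = v i) → ∀ k,
      ((H k).filter (fun i => z i = true)).card
        = (((H k) ∩ A).filter (fun i => z i = true)).card + n₁' k := by
    intro z hz k
    have hU : H k = ((H k) ∩ A) ∪ ((H k) \ A) := by
      ext i; simp only [mem_union, mem_inter, mem_sdiff]; tauto
    have hd : Disjoint (((H k) ∩ A).filter (fun i => z i = true))
        (((H k) \ A).filter (fun i => z i = true)) := by
      refine Finset.disjoint_left.2 fun i hi hj => ?_
      exact (Finset.mem_sdiff.1 (Finset.mem_filter.1 hj).1).2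
        (Finset.mem_inter.1 (Finset.mem_filter.1 hi).1).2
    have hv : ((H k) \ A).filter (fun i => z i = true)
        = ((H k) \ A).filter (fun i => v i = true) := by
      apply Finset.filter_congr
      intro i hi
      rw [hz i (Finset.mem_sdiff.1 hi).2]
    rw [hn₁' k, ← hv, ← Finset.card_union_of_disjoint hd, ← Finset.filter_union, ← hU]
  -- condition equivalence
  have hcond : ∀ z : Fin n → Bool, (∀ i ∉ A, z i = v i) → ∀ k,
      (((H k).filter (fun i => z i = true)).card = n₁ k ↔
        (((H k) ∩ A).filter (fun i => z i = true)).card = n₁ k - n₁' k) := by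
    intro z hz k
    rw [hsplit z hz k]
    have := h₁ k
    omega
  -- π on the relevant set
  have hπ' : ∀ z : Fin n → Bool, (∀ i ∉ A, z i = v i) →
      π z = if (∀ k, (((H k) ∩ A).filter (fun i => z i = true)).card = n₁ k - n₁' k)
        then c else 0 := by
    intro z hz
    rw [hπ z, Fintype.prod_ite_zero]
    by_cases hP : ∀ k, (((H k) ∩ A).filter (fun i => z i = true)).card = n₁ k - n₁' k
    · rw [if_pos hP, if_pos (fun k => (hcond z hz k).2 (hP k))]
    · rw [if_neg hP, if_neg (fun hQ => hP (fun k => (hcond z hz k).1 (hQ k)))]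
  -- numerator is a single term
  set z₀ : Fin n → Bool := fun i => if i ∈ A then w i else v i with hz₀_def
  have hz₀A : ∀ i ∉ A, z₀ i = v i := fun i hi => if_neg hi
  have hNumSet : Finset.univ.filter
      (fun z : Fin n → Bool => (∀ i ∈ A, z i = w i) ∧ (∀ i ∉ A, z i = v i)) = {z₀} := by
    ext z
    simp only [mem_filter, mem_univ, true_and, mem_singleton]
    constructor
    · rintro ⟨hA, hA'⟩
      funext i
      by_cases hi : i ∈ A
      · rw [hA i hi, hz₀_def]; simp [hi]
      · rw [hA' i hi, hz₀_def]; simp [hi]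
    · rintro rfl
      exact ⟨fun i hi => if_pos hi, fun i hi => if_neg hi⟩
  have hz₀w : ∀ k, ((H k) ∩ A).filter (fun i => z₀ i = true)
      = ((H k) ∩ A).filter (fun i => w i = true) := by
    intro k
    apply Finset.filter_congr
    intro i hi
    rw [hz₀_def]
    simp [(Finset.mem_inter.1 hi).2]
  have hNum : (∑ z ∈ Finset.univ.filter
      (fun z : Fin n → Bool => (∀ i ∈ A, z i = w i) ∧ (∀ i ∉ A, z i = v i)), π z)
      = if (∀ k, (((H k) ∩ A).filter (fun i => w i = true)).card = n₁ k - n₁' k)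
        then c else 0 := by
    rw [hNumSet, Finset.sum_singleton, hπ' z₀ hz₀A]
    by_cases hP : ∀ k, (((H k) ∩ A).filter (fun i => w i = true)).card = n₁ k - n₁' k
    · rw [if_pos hP, if_pos (fun k => by rw [hz₀w k]; exact hP k)]
    · rw [if_neg hP, if_neg (fun hQ => hP (fun k => by rw [← hz₀w k]; exact hQ k))]
  -- denominator
  have hcov : ∀ i ∈ A, ∃ k, i ∈ (H k) ∩ A := by
    intro i hi
    have : i ∈ Finset.univ.biUnion H := hcover ▸ Finset.mem_univ i
    obtain ⟨k, _, hk⟩ := Finset.mem_biUnion.1 this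
    exact ⟨k, Finset.mem_inter.2 ⟨hk, hi⟩⟩
  have hdisjB : Pairwise (Function.onFun Disjoint (fun k => (H k) ∩ A)) := by
    intro j k hjk
    exact Finset.disjoint_left.2 fun i hi hi' =>
      Finset.disjoint_left.mp (hdisj hjk) (Finset.mem_inter.1 hi).1 (Finset.mem_inter.1 hi').1
  have hcount := strat_count (fun k => (H k) ∩ A) hdisjB A
    (fun k => Finset.inter_subset_right) hcov v (fun k => n₁ k - n₁' k)
  have hDen : (∑ z ∈ Finset.univ.filter (fun z : Fin n → Bool => ∀ i ∉ A, z i = v i), π z)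
      = (∏ k, (((H k) ∩ A).card.choose (n₁ k - n₁' k) : ℝ)) * c := by
    rw [Finset.sum_congr rfl (fun z hz => hπ' z (Finset.mem_filter.1 hz).2)]
    rw [Finset.sum_ite, Finset.sum_const_zero, add_zero, Finset.sum_const,
      Finset.filter_filter, nsmul_eq_mul]
    congr 1
    rw [hcount]
    push_cast
    rfl
  rw [hNum, hDen]
  -- positivity
  have hcpos : 0 < c := by
    apply Finset.prod_pos
    intro k _
    have := Nat.choose_pos (hn₁ k)
    positivity
  have hchoose : ∀ k, 0 < (((H k) ∩ A).card.choose (n₁ k - n₁' k)) := fun k =>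
    Nat.choose_pos (h₂ k)
  rw [Fintype.prod_ite_zero]
  split_ifs with h
  · have hM : (∏ k, (((H k) ∩ A).card.choose (n₁ k - n₁' k) : ℝ)) ≠ 0 := by
      apply Finset.prod_ne_zero_iff.2
      intro k _
      exact_mod_cast (hchoose k).ne'
    rw [div_eq_iff (by positivity)]
    rw [Finset.prod_div_distrib, Finset.prod_const_one]
    field_simp
  · simp
end
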